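/- arXiv:1203.4124 — 3 statements merged into one kernel-verified Lean document; each statement's English description precedes it below -/
import Mathlib

section
/- Let p ≥ 2 and K > 0, let B be a real Banach space with modulus of uniform convexity η(ε) = K ε^p, let T be a nonexpansive linear operator on B, let x ∈ B with x ≠ 0, and let ε > 0. Set M = ⌈16‖x‖/ε⌉ and γ = (ε/8) · K · (ε/(8‖x‖))^{p−1}. Suppose N ≥ 1 and u ≥ 1 are natural numbers such that for every m with 1 ≤ m ≤ u one has ‖A_m x‖ ≥ ‖A_N x‖ − γ. Then for every pair of integers i, j with M·N ≤ i ≤ ⌊u/2⌋ and M·N ≤ j ≤ ⌊u/2⌋, one has ‖A_i x − A_j x‖ < ε. -/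
open Finset

/-- The ergodic averages `A n x = (1/n) ∑_{i<n} Tⁱ x`. -/
noncomputable def ergAvg {B : Type*} [NormedAddCommGroup B] [Module ℝ B]
    (T : B →ₗ[ℝ] B) (n : ℕ) (x : B) : B :=
  (n : ℝ)⁻¹ • ∑ i ∈ Finset.range n, (T ^ i) x

/-!
Write `y = A_N x` and `S = T^N`. Since `A_{2cN} x = A^S_c ((y + S^c y) / 2)` and averaging is
nonexpansive, near-minimality of `‖A_N x‖` gives `‖(y + S^c y) / 2‖ ≥ ‖y‖ - γ`, and the
power-type modulus of convexity turns this into `‖y - S^c y‖ < ε/4` whenever `2cN ≤ u`.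
Averaging over `c < l` gives `‖A_{lN} x - y‖ ≤ ε/4`, and for `n ≥ MN` rounding `n` down to a
multiple of `N` moves `A_n x` by at most `2N‖x‖/n ≤ ε/8`. So all `A_n x` with `MN ≤ n ≤ u/2`
lie within `3ε/8` of `y`.
-/

section ErgodicAverages

variable {B : Type*} [NormedAddCommGroup B] [NormedSpace ℝ B] {T : B →ₗ[ℝ] B}

lemma norm_pow_apply_le (hT : ∀ y, ‖T y‖ ≤ ‖y‖) (k : ℕ) (y : B) : ‖(T ^ k) y‖ ≤ ‖y‖ := by
  induction k generalizing y with
  | zero => simp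
  | succ k ih =>
    rw [pow_succ, Module.End.mul_apply]
    exact (ih (T y)).trans (hT y)

lemma norm_inv_smul_sum_range_le {n : ℕ} {f : ℕ → B} {C : ℝ} (hC : 0 ≤ C)
    (h : ∀ k < n, ‖f k‖ ≤ C) : ‖(n : ℝ)⁻¹ • ∑ k ∈ range n, f k‖ ≤ C := by
  rcases n.eq_zero_or_pos with rfl | hn
  · simpa using hC
  have hsum : ‖∑ k ∈ range n, f k‖ ≤ n * C := by
    simpa using norm_sum_le_of_le (range n) fun k hk => h k (mem_range.mp hk)
  rw [norm_smul, norm_inv, Real.norm_natCast, inv_mul_le_iff₀ (by exact_mod_cast hn)]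
  exact hsum

lemma norm_ergAvg_le (hT : ∀ y, ‖T y‖ ≤ ‖y‖) (n : ℕ) (x : B) : ‖ergAvg T n x‖ ≤ ‖x‖ :=
  norm_inv_smul_sum_range_le (norm_nonneg x) fun k _ => norm_pow_apply_le hT k x

lemma norm_ergAvg_sub_self_le {n : ℕ} {x : B} {C : ℝ} (hn : 0 < n)
    (h : ∀ k < n, ‖(T ^ k) x - x‖ ≤ C) : ‖ergAvg T n x - x‖ ≤ C := by
  have hn' : (n : ℝ) ≠ 0 := by exact_mod_cast hn.ne'
  have hC : 0 ≤ C := by simpa using h 0 hn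
  have hrepr : ergAvg T n x - x = (n : ℝ)⁻¹ • ∑ k ∈ range n, ((T ^ k) x - x) := by
    rw [sum_sub_distrib, smul_sub, sum_const, card_range, ← Nat.cast_smul_eq_nsmul ℝ,
      inv_smul_smul₀ hn', ergAvg]
  rw [hrepr]
  exact norm_inv_smul_sum_range_le hC h

lemma natCast_smul_ergAvg (n : ℕ) (x : B) : (n : ℝ) • ergAvg T n x = ∑ i ∈ range n, (T ^ i) x := by
  rcases eq_or_ne n 0 with rfl | hn
  · simp
  · rw [ergAvg, smul_inv_smul₀ (by exact_mod_cast hn)]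

lemma sum_range_mul_pow_apply (T : B →ₗ[ℝ] B) (m n : ℕ) (x : B) :
    ∑ t ∈ range (m * n), (T ^ t) x = ∑ k ∈ range m, ((T ^ n) ^ k) (∑ j ∈ range n, (T ^ j) x) := by
  induction m with
  | zero => simp
  | succ m ih =>
    rw [add_mul, one_mul, sum_range_add, ih, sum_range_succ, map_sum, ← pow_mul']
    simp only [← Module.End.mul_apply, ← pow_add]

lemma ergAvg_mul (T : B →ₗ[ℝ] B) (m n : ℕ) (x : B) :
    ergAvg T (m * n) x = ergAvg (T ^ n) m (ergAvg T n x) := by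
  simp only [ergAvg, sum_range_mul_pow_apply, map_smul, ← smul_sum, smul_smul, Nat.cast_mul,
    mul_inv]

lemma ergAvg_mul' (T : B →ₗ[ℝ] B) (m n : ℕ) (x : B) :
    ergAvg T (m * n) x = ergAvg T n (ergAvg (T ^ n) m x) := by
  have hcomm : ∀ j k, ((T ^ n) ^ k) ((T ^ j) x) = (T ^ j) (((T ^ n) ^ k) x) := fun j k => by
    rw [← Module.End.mul_apply, ← Module.End.mul_apply, ← pow_mul, pow_mul_comm]
  rw [ergAvg_mul]
  simp only [ergAvg, map_smul, map_sum, hcomm, smul_sum, smul_smul]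
  rw [sum_comm]
  simp only [mul_comm]

lemma ergAvg_two (T : B →ₗ[ℝ] B) (x : B) : ergAvg T 2 x = (1 / 2 : ℝ) • (x + T x) := by
  simp [ergAvg, sum_range_succ]

lemma ergAvg_add_sub_ergAvg (T : B →ₗ[ℝ] B) (m k : ℕ) (x : B) :
    ergAvg T (m + k) x - ergAvg T m x
      = ((k : ℝ) / (m + k)) • ((T ^ m) (ergAvg T k x) - ergAvg T m x) := by
  rcases eq_or_ne (m + k) 0 with h | h
  · obtain ⟨rfl, rfl⟩ : m = 0 ∧ k = 0 := by omega
    simp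
  have h' : (m + k : ℝ) ≠ 0 := by exact_mod_cast h
  apply smul_right_injective B h'
  have hk : (T ^ m) ((k : ℝ) • ergAvg T k x) = ∑ j ∈ range k, (T ^ (m + j)) x := by
    rw [natCast_smul_ergAvg, map_sum]
    simp only [pow_add, Module.End.mul_apply]
  dsimp only
  rw [smul_smul, mul_div_cancel₀ _ h', smul_sub, smul_sub, ← Nat.cast_add, natCast_smul_ergAvg,
    sum_range_add, ← hk, map_smul, Nat.cast_add, add_smul, natCast_smul_ergAvg]
  abel

lemma norm_ergAvg_add_sub_ergAvg_le (hT : ∀ y, ‖T y‖ ≤ ‖y‖) (m k : ℕ) (x : B) :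
    ‖ergAvg T (m + k) x - ergAvg T m x‖ ≤ 2 * k / (m + k : ℕ) * ‖x‖ := by
  rw [ergAvg_add_sub_ergAvg, Nat.cast_add, norm_smul, Real.norm_of_nonneg (by positivity),
    mul_div_assoc, mul_comm 2, mul_assoc]
  gcongr
  calc ‖(T ^ m) (ergAvg T k x) - ergAvg T m x‖
      ≤ ‖(T ^ m) (ergAvg T k x)‖ + ‖ergAvg T m x‖ := norm_sub_le _ _
    _ ≤ ‖x‖ + ‖x‖ := by
        gcongr
        · exact (norm_pow_apply_le hT m _).trans (norm_ergAvg_le hT k x)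
        · exact norm_ergAvg_le hT m x
    _ = 2 * ‖x‖ := by ring

end ErgodicAverages

section UniformConvexity

def HasPowerModulusOfConvexity (K p : ℝ) (B : Type*) [NormedAddCommGroup B] [Module ℝ B] :
    Prop :=
  ∀ ε ∈ Set.Ioc (0 : ℝ) 2, ∀ x y : B, ‖x‖ ≤ 1 → ‖y‖ ≤ 1 → ε ≤ ‖x - y‖ →
    ‖(1 / 2 : ℝ) • (x + y)‖ ≤ 1 - K * ε ^ p

variable {B : Type*} [NormedAddCommGroup B] [NormedSpace ℝ B] {p K : ℝ}

lemma norm_midpoint_le_of_uniformConvex (huc : HasPowerModulusOfConvexity K p B)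
    {δ r : ℝ} {v w : B} (hδ : 0 < δ) (hv : ‖v‖ ≤ r) (hw : ‖w‖ ≤ r) (hvw : δ ≤ ‖v - w‖) :
    ‖(1 / 2 : ℝ) • (v + w)‖ ≤ r - δ * (K * (δ / r) ^ (p - 1)) := by
  have hr : 0 < r := by linarith [norm_sub_le v w]
  have hscale : ∀ z : B, ‖z‖ = r * ‖r⁻¹ • z‖ := fun z => by
    rw [norm_smul, norm_inv, Real.norm_of_nonneg hr.le, mul_inv_cancel_left₀ hr.ne']
  have hunit : ∀ z : B, ‖z‖ ≤ r → ‖r⁻¹ • z‖ ≤ 1 := fun z hz => by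
    rw [hscale z] at hz
    exact le_of_mul_le_mul_left (by linarith) hr
  have hδr : δ / r ≤ ‖r⁻¹ • v - r⁻¹ • w‖ := by
    rw [← smul_sub, div_le_iff₀ hr, mul_comm, ← hscale]
    exact hvw
  have hδ2 : δ / r ≤ 2 := by
    rw [div_le_iff₀ hr]
    linarith [norm_sub_le v w]
  have key := huc (δ / r) ⟨by positivity, hδ2⟩ _ _ (hunit v hv) (hunit w hw) hδr
  calc ‖(1 / 2 : ℝ) • (v + w)‖ = r * ‖(1 / 2 : ℝ) • (r⁻¹ • v + r⁻¹ • w)‖ := by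
        rw [hscale, ← smul_add, smul_comm]
    _ ≤ r * (1 - K * (δ / r) ^ p) := by gcongr
    _ = r - δ * (K * (δ / r) ^ (p - 1)) := by
        rw [Real.rpow_sub_one (by positivity)]
        field_simp

lemma norm_sub_lt_of_le_norm_midpoint (huc : HasPowerModulusOfConvexity K p B)
    (hp : 1 ≤ p) (hK : 0 < K) {ε b : ℝ} {v w : B} (hε : 0 < ε) (hw : ‖w‖ ≤ ‖v‖) (hvb : ‖v‖ ≤ b)
    (hmid : ‖v‖ - ε / 8 * (K * (ε / (8 * b)) ^ (p - 1)) ≤ ‖(1 / 2 : ℝ) • (v + w)‖) :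
    ‖v - w‖ < ε / 4 := by
  by_contra! hvw
  have hv : 0 < ‖v‖ := by linarith [norm_sub_le v w]
  have hconv := norm_midpoint_le_of_uniformConvex huc (by positivity) le_rfl hw hvw
  have hdefect : ε / 8 * (K * (ε / (8 * b)) ^ (p - 1)) < ε / 4 * (K * (ε / 4 / ‖v‖) ^ (p - 1)) := by
    have hb : ε / (8 * b) ≤ ε / 4 / ‖v‖ := by
      rw [div_div]
      gcongr
      linarith
    calc ε / 8 * (K * (ε / (8 * b)) ^ (p - 1)) ≤ ε / 8 * (K * (ε / 4 / ‖v‖) ^ (p - 1)) := by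
          gcongr
          exact div_nonneg hε.le (by linarith)
      _ < ε / 4 * (K * (ε / 4 / ‖v‖) ^ (p - 1)) := by
          gcongr
          linarith
  linarith

end UniformConvexity

section KohlenbachLeustean

variable {p K : ℝ} {B : Type*} [NormedAddCommGroup B] [NormedSpace ℝ B] {T : B →ₗ[ℝ] B}
  {x : B} {ε : ℝ} {N u : ℕ}

lemma norm_ergAvg_sub_ergAvg_div_mul_le (hT : ∀ y, ‖T y‖ ≤ ‖y‖) (hε : 0 < ε) (hN : 0 < N)
    {n : ℕ} (hn : ⌈16 * ‖x‖ / ε⌉₊ * N ≤ n) :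
    ‖ergAvg T n x - ergAvg T (n / N * N) x‖ ≤ ε / 8 := by
  have hsplit := norm_ergAvg_add_sub_ergAvg_le hT (n / N * N) (n % N) x
  rw [Nat.div_add_mod' n N] at hsplit
  refine hsplit.trans ?_
  have hmod : ((n % N : ℕ) : ℝ) ≤ N := by exact_mod_cast (Nat.mod_lt n hN).le
  have hMN : 16 * ‖x‖ / ε * N ≤ n :=
    calc 16 * ‖x‖ / ε * N ≤ ⌈16 * ‖x‖ / ε⌉₊ * N := by gcongr; exact Nat.le_ceil _
      _ ≤ n := by exact_mod_cast hn
  rw [div_mul_eq_mul_div, div_le_iff₀ hε] at hMN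
  rw [div_mul_eq_mul_div]
  refine div_le_of_le_mul₀ n.cast_nonneg (by linarith) ?_
  nlinarith [mul_le_mul_of_nonneg_right hmod (norm_nonneg x)]

lemma norm_ergAvg_sub_pow_ergAvg_lt
    (huc : HasPowerModulusOfConvexity K p B)
    (hp : 1 ≤ p) (hK : 0 < K) (hT : ∀ y, ‖T y‖ ≤ ‖y‖) (hε : 0 < ε) (c : ℕ)
    (hlow : ‖ergAvg T N x‖ - ε / 8 * (K * (ε / (8 * ‖x‖)) ^ (p - 1))
      ≤ ‖ergAvg T (2 * c * N) x‖) :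
    ‖ergAvg T N x - ((T ^ N) ^ c) (ergAvg T N x)‖ < ε / 4 := by
  have hS := norm_pow_apply_le hT N
  refine norm_sub_lt_of_le_norm_midpoint huc hp hK hε (norm_pow_apply_le hS c _)
    (norm_ergAvg_le hT N x) (hlow.trans ?_)
  rw [ergAvg_mul T (2 * c) N, ergAvg_mul' (T ^ N) 2 c, ergAvg_two]
  exact norm_ergAvg_le hS c _

lemma norm_ergAvg_mul_sub_ergAvg_le
    (huc : HasPowerModulusOfConvexity K p B)
    (hp : 1 ≤ p) (hK : 0 < K) (hT : ∀ y, ‖T y‖ ≤ ‖y‖) (hε : 0 < ε) (hN : 0 < N)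
    (hmin : ∀ m : ℕ, 1 ≤ m → m ≤ u →
      ‖ergAvg T N x‖ - ε / 8 * (K * (ε / (8 * ‖x‖)) ^ (p - 1)) ≤ ‖ergAvg T m x‖)
    {l : ℕ} (hl : 0 < l) (hlu : 2 * l * N ≤ u) :
    ‖ergAvg T (l * N) x - ergAvg T N x‖ ≤ ε / 4 := by
  rw [ergAvg_mul]
  refine norm_ergAvg_sub_self_le hl fun k hk => ?_
  rcases k.eq_zero_or_pos with rfl | hk0
  · simp only [pow_zero, Module.End.one_apply, sub_self, norm_zero]
    linarith
  rw [norm_sub_rev]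
  refine (norm_ergAvg_sub_pow_ergAvg_lt huc hp hK hT hε k (hmin _ ?_ ?_)).le
  · exact Nat.mul_pos (by omega) hN
  · exact (Nat.mul_le_mul_right N (by omega)).trans hlu

lemma norm_ergAvg_sub_ergAvg_le_of_ceil_mul_le
    (huc : HasPowerModulusOfConvexity K p B)
    (hp : 1 ≤ p) (hK : 0 < K) (hT : ∀ y, ‖T y‖ ≤ ‖y‖) (hx : x ≠ 0) (hε : 0 < ε) (hN : 0 < N)
    (hmin : ∀ m : ℕ, 1 ≤ m → m ≤ u →
      ‖ergAvg T N x‖ - ε / 8 * (K * (ε / (8 * ‖x‖)) ^ (p - 1)) ≤ ‖ergAvg T m x‖)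
    {n : ℕ} (hn : ⌈16 * ‖x‖ / ε⌉₊ * N ≤ n) (hnu : n ≤ u / 2) :
    ‖ergAvg T n x - ergAvg T N x‖ ≤ ε / 8 + ε / 4 := by
  have hM : 0 < ⌈16 * ‖x‖ / ε⌉₊ := Nat.ceil_pos.mpr (by positivity)
  have hl : 0 < n / N := Nat.div_pos ((Nat.le_mul_of_pos_left N hM).trans hn) hN
  have hlu : 2 * (n / N) * N ≤ u := by
    have := Nat.div_mul_le_self n N
    rw [mul_assoc]
    omega
  calc ‖ergAvg T n x - ergAvg T N x‖
      ≤ ‖ergAvg T n x - ergAvg T (n / N * N) x‖ + ‖ergAvg T (n / N * N) x - ergAvg T N x‖ :=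
        norm_sub_le_norm_sub_add_norm_sub _ _ _
    _ ≤ ε / 8 + ε / 4 := add_le_add (norm_ergAvg_sub_ergAvg_div_mul_le hT hε hN hn)
        (norm_ergAvg_mul_sub_ergAvg_le huc hp hK hT hε hN hmin hl hlu)

end KohlenbachLeustean

theorem stmt11_general (p K : ℝ) (hp : 2 ≤ p) (hK : 0 < K)
    {B : Type*} [NormedAddCommGroup B] [NormedSpace ℝ B]
    (huc : ∀ ε ∈ Set.Ioc (0 : ℝ) 2, ∀ x y : B, ‖x‖ ≤ 1 → ‖y‖ ≤ 1 → ε ≤ ‖x - y‖ →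
      ‖(1 / 2 : ℝ) • (x + y)‖ ≤ 1 - K * ε ^ p)
    (T : B →ₗ[ℝ] B) (hT : ∀ y : B, ‖T y‖ ≤ ‖y‖)
    (x : B) (hx : x ≠ 0) (ε : ℝ) (hε : 0 < ε)
    (N u : ℕ) (hN : 1 ≤ N)
    (hmin : ∀ m : ℕ, 1 ≤ m → m ≤ u →
      ‖ergAvg T N x‖ - ε / 8 * (K * (ε / (8 * ‖x‖)) ^ (p - 1)) ≤ ‖ergAvg T m x‖) :
    ∀ i j : ℕ, ⌈16 * ‖x‖ / ε⌉₊ * N ≤ i → i ≤ u / 2 → ⌈16 * ‖x‖ / ε⌉₊ * N ≤ j → j ≤ u / 2 →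
      ‖ergAvg T i x - ergAvg T j x‖ < ε := by
  intro i j hi hiu hj hju
  have hi' := norm_ergAvg_sub_ergAvg_le_of_ceil_mul_le huc (by linarith) hK hT hx hε hN hmin hi hiu
  have hj' := norm_ergAvg_sub_ergAvg_le_of_ceil_mul_le huc (by linarith) hK hT hx hε hN hmin hj hju
  calc ‖ergAvg T i x - ergAvg T j x‖
      ≤ ‖ergAvg T i x - ergAvg T N x‖ + ‖ergAvg T j x - ergAvg T N x‖ := by
        rw [norm_sub_rev (ergAvg T j x)]
        exact norm_sub_le_norm_sub_add_norm_sub _ _ _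
    _ < ε := by linarith

/-- Kohlenbach–Leuştean lemma: with `M = ⌈16‖x‖/ε⌉` and `γ = (ε/8)·K·(ε/(8‖x‖))^{p-1}`, if
`‖A_m x‖ ≥ ‖A_N x‖ − γ` for every `1 ≤ m ≤ u`, then `‖A_i x − A_j x‖ < ε` for all
`i, j ∈ [M·N, ⌊u/2⌋]`. -/
theorem stmt11 (p K : ℝ) (hp : 2 ≤ p) (hK : 0 < K)
    {B : Type*} [NormedAddCommGroup B] [NormedSpace ℝ B] [CompleteSpace B]
    (huc : ∀ ε ∈ Set.Ioc (0 : ℝ) 2, ∀ x y : B, ‖x‖ ≤ 1 → ‖y‖ ≤ 1 → ε ≤ ‖x - y‖ →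
      ‖(1 / 2 : ℝ) • (x + y)‖ ≤ 1 - K * ε ^ p)
    (T : B →ₗ[ℝ] B) (hT : ∀ y : B, ‖T y‖ ≤ ‖y‖)
    (x : B) (hx : x ≠ 0) (ε : ℝ) (hε : 0 < ε)
    (N u : ℕ) (hN : 1 ≤ N) (hu : 1 ≤ u)
    (hmin : ∀ m : ℕ, 1 ≤ m → m ≤ u →
      ‖ergAvg T N x‖ - ε / 8 * (K * (ε / (8 * ‖x‖)) ^ (p - 1)) ≤ ‖ergAvg T m x‖) :
    ∀ i j : ℕ, ⌈16 * ‖x‖ / ε⌉₊ * N ≤ i → i ≤ u / 2 → ⌈16 * ‖x‖ / ε⌉₊ * N ≤ j → j ≤ u / 2 →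
      ‖ergAvg T i x - ergAvg T j x‖ < ε :=
  stmt11_general p K hp hK huc T hT x hx ε hε N u hN hmin
end

section
/- Let (a_n)_{n≥1} be a sequence in a metric space, let ε > 0, let s ∈ ℕ, and let g : ℕ → ℕ be a monotone function with n ≤ g(n) for all n. If (a_n) does not admit s+1 ε-fluctuations, then there exists i ≤ s such that for all m, n with g^i(1) ≤ m ≤ g^{i+1}(1) and g^i(1) ≤ n ≤ g^{i+1}(1), d(a_m, a_n) < ε. In particular, setting n₀ = g^i(1) ≤ g^s(1), one has d(a_m, a_n) < ε for all m, n ∈ [n₀, g(n₀)]; i.e., g^s(1) is a bound on the rate of metastability at ε and g. -/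
/-- The sequence `(a n)_{n ≥ 1}` in a metric space admits `k` `ε`-fluctuations: there are
indices `1 ≤ i₁ ≤ j₁ ≤ i₂ ≤ j₂ ≤ … ≤ i_k ≤ j_k` with `dist (a (j u)) (a (i u)) ≥ ε` for each
`u`. -/
def AdmitsFluctuationsDist {X : Type*} [MetricSpace X] (a : ℕ → X) (ε : ℝ) (k : ℕ) : Prop :=
  ∃ i j : ℕ → ℕ,
    (∀ u < k, 1 ≤ i u ∧ i u ≤ j u ∧ ε ≤ dist (a (j u)) (a (i u))) ∧
    (∀ u, u + 1 < k → j u ≤ i (u + 1))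

/-- A bound on the number of `ε`-fluctuations yields a bound on the rate of metastability:
if `(a n)` does not admit `s+1` `ε`-fluctuations and `g` is monotone with `n ≤ g n`, then one of
the intervals `[gⁱ(1), gⁱ⁺¹(1)]`, `i ≤ s`, contains no pair at distance `≥ ε`; in particular
`n₀ = gⁱ(1) ≤ gˢ(1)` satisfies `dist (a m) (a n) < ε` for all `m, n ∈ [n₀, g n₀]`. -/
theorem stmt15 {X : Type*} [MetricSpace X] (a : ℕ → X) (ε : ℝ) (hε : 0 < ε)
    (s : ℕ) (g : ℕ → ℕ) (hmono : Monotone g) (hge : ∀ n, n ≤ g n)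
    (h : ¬ AdmitsFluctuationsDist a ε (s + 1)) :
    (∃ i ≤ s, ∀ m n : ℕ, g^[i] 1 ≤ m → m ≤ g^[i + 1] 1 → g^[i] 1 ≤ n → n ≤ g^[i + 1] 1 →
        dist (a m) (a n) < ε) ∧
      ∃ n₀ : ℕ, n₀ ≤ g^[s] 1 ∧ ∀ m n : ℕ, n₀ ≤ m → m ≤ g n₀ → n₀ ≤ n → n ≤ g n₀ →
        dist (a m) (a n) < ε := by
  have h1 : ∀ i, 1 ≤ g^[i] 1 := by
    intro i
    induction i with
    | zero => simp
    | succ n ih => rw [Function.iterate_succ_apply']; exact ih.trans (hge _)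
  have hstep : ∀ i, g^[i] 1 ≤ g^[i + 1] 1 := fun i => by
    rw [Function.iterate_succ_apply']; exact hge _
  have hmono' : Monotone fun i => g^[i] 1 := monotone_nat_of_le_succ hstep
  have main : ∃ i ≤ s, ∀ m n : ℕ, g^[i] 1 ≤ m → m ≤ g^[i + 1] 1 → g^[i] 1 ≤ n →
      n ≤ g^[i + 1] 1 → dist (a m) (a n) < ε := by
    by_contra hc
    push_neg at hc
    have hc' : ∀ u : ℕ, ∃ p q : ℕ, g^[u] 1 ≤ p ∧ p ≤ q ∧ q ≤ g^[u + 1] 1 ∧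
        (u ≤ s → ε ≤ dist (a q) (a p)) := by
      intro u
      by_cases hu : u ≤ s
      · obtain ⟨m, n, hm1, hm2, hn1, hn2, hd⟩ := hc u hu
        rcases le_total m n with hmn | hmn
        · exact ⟨m, n, hm1, hmn, hn2, fun _ => by rwa [dist_comm]⟩
        · exact ⟨n, m, hn1, hmn, hm2, fun _ => hd⟩
      · exact ⟨g^[u] 1, g^[u] 1, le_refl _, le_refl _, hstep u, fun hu' => absurd hu' hu⟩
    choose p q hp hpq hq hd using hc'
    apply h
    refine ⟨p, q, fun u hu => ⟨(h1 u).trans (hp u), hpq u, hd u (Nat.lt_succ_iff.mp hu)⟩,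
      fun u hu => (hq u).trans (hp (u + 1))⟩
  refine ⟨main, ?_⟩
  obtain ⟨i, his, hi⟩ := main
  refine ⟨g^[i] 1, hmono' his, fun m n hm1 hm2 hn1 hn2 => ?_⟩
  exact hi m n hm1 (by rwa [Function.iterate_succ_apply']) hn1
    (by rwa [Function.iterate_succ_apply'])
end

section
/- Let u ≥ 2 be a natural number, let B be the space of u-tuples of reals with the ℓ¹ norm ‖z‖ = ∑_{j<u} |z_j|, let T : B → B be the cyclic right shift (T z)_j = z_{(j−1) mod u}, and let x = (1, 0, …, 0). Then for every natural number k with 2^{k+1} ≤ u, ‖A_{2^{k+1}} x − A_{2^k} x‖ = 1. Consequently, for p ≥ 1, ∑_{k : 2^{k+1} ≤ u} ‖A_{2^{k+1}} x − A_{2^k} x‖^p ≥ ⌊log₂ u⌋, which is unbounded as u → ∞, even though T is an isometry and ‖x‖ = 1. -/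
open Finset

/-- The cyclic right shift on `u`-tuples of reals: `(T z) j = z ((j - 1) mod u)`. -/
def cycShift (u : ℕ) (z : Fin u → ℝ) : Fin u → ℝ :=
  fun j => z ⟨((j : ℕ) + (u - 1)) % u, Nat.mod_lt _ (Nat.lt_of_le_of_lt (Nat.zero_le _) j.isLt)⟩

/-- The ergodic averages `A n z = (1/n) ∑_{i<n} Tⁱ z` for the cyclic shift. -/
noncomputable def cycShiftAvg (u n : ℕ) (z : Fin u → ℝ) : Fin u → ℝ :=
  (n : ℝ)⁻¹ • ∑ i ∈ Finset.range n, (cycShift u)^[i] z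

/-- The `ℓ¹` norm on `u`-tuples of reals. -/
def l1Norm (u : ℕ) (z : Fin u → ℝ) : ℝ := ∑ j : Fin u, |z j|

/-- The point `x = (1, 0, …, 0)`. -/
def e0 (u : ℕ) : Fin u → ℝ := fun j => if (j : ℕ) = 0 then 1 else 0

/-! `T` acts on `Fin u → ℝ` by `z ↦ z ∘ (· - 1)`, so `Tⁱ x` is the unit vector at `i mod u` and,
for `n ≤ u`, `A_n x` is `1/n` on `[0, n)` and `0` elsewhere. Hence `A_{2m} x − A_m x` is
`−1/(2m)` on `[0, m)` and `1/(2m)` on `[m, 2m)`: its absolute value is `A_{2m} x`, of mass `1`. -/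

section CyclicShift

open scoped Fin.NatCast

variable {u : ℕ} [NeZero u]

lemma cycShift_apply (z : Fin u → ℝ) (j : Fin u) : cycShift u z j = z (j - 1) := by
  show z _ = z _
  congr 1
  apply Fin.ext
  rw [Fin.sub_def]
  rcases (NeZero.one_le : 1 ≤ u).eq_or_lt with rfl | hu
  · simp
  · simp [Nat.mod_eq_of_lt hu, add_comm]

lemma iterate_cycShift_apply (z : Fin u → ℝ) (i : ℕ) (j : Fin u) :
    (cycShift u)^[i] z j = z (j - (i : Fin u)) := by
  induction i generalizing j with
  | zero => simp
  | succ i ih =>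
    rw [Function.iterate_succ_apply', cycShift_apply, ih, Nat.cast_succ, sub_sub, add_comm]

lemma l1Norm_cycShift (z : Fin u → ℝ) : l1Norm u (cycShift u z) = l1Norm u z := by
  simp only [l1Norm, cycShift_apply]
  exact Equiv.sum_comp (Equiv.subRight 1) (fun j => |z j|)

lemma e0_apply (j : Fin u) : e0 u j = if j = 0 then 1 else 0 := by
  simp only [e0, Fin.ext_iff, Fin.val_zero]

lemma l1Norm_e0 : l1Norm u (e0 u) = 1 := by
  simp [l1Norm, e0_apply, apply_ite]

lemma iterate_cycShift_e0_apply (i : ℕ) (j : Fin u) :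
    (cycShift u)^[i] (e0 u) j = if j = (i : Fin u) then 1 else 0 := by
  simp [iterate_cycShift_apply, e0_apply, sub_eq_zero]

lemma cycShiftAvg_e0_apply {n : ℕ} (hn : n ≤ u) (j : Fin u) :
    cycShiftAvg u n (e0 u) j = if (j : ℕ) < n then (n : ℝ)⁻¹ else 0 := by
  have hcast : ∀ i ∈ range n, j = (i : Fin u) ↔ (j : ℕ) = i := fun i hi => by
    rw [Fin.ext_iff, Fin.val_natCast, Nat.mod_eq_of_lt ((mem_range.mp hi).trans_le hn)]
  simp only [cycShiftAvg, Pi.smul_apply, Finset.sum_apply, iterate_cycShift_e0_apply, smul_eq_mul]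
  rw [sum_congr rfl fun i hi => if_congr (hcast i hi) rfl rfl, sum_ite_eq]
  split_ifs <;> simp_all

lemma sum_cycShiftAvg_e0 {n : ℕ} (hn : 0 < n) (hnu : n ≤ u) :
    ∑ j, cycShiftAvg u n (e0 u) j = 1 := by
  simp only [cycShiftAvg_e0_apply hnu]
  rw [← sum_filter, sum_const, Fin.card_filter_val_lt, min_eq_right hnu, nsmul_eq_mul]
  exact mul_inv_cancel₀ (by positivity)

lemma abs_cycShiftAvg_two_mul_sub_e0_apply {m : ℕ} (hm : 2 * m ≤ u) (j : Fin u) :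
    |(cycShiftAvg u (2 * m) (e0 u) - cycShiftAvg u m (e0 u)) j| =
      cycShiftAvg u (2 * m) (e0 u) j := by
  rw [Pi.sub_apply, cycShiftAvg_e0_apply hm, cycShiftAvg_e0_apply (by omega)]
  split_ifs with h2 h1 h1
  · push_cast
    rw [show (2 * m : ℝ)⁻¹ - (m : ℝ)⁻¹ = -(2 * m : ℝ)⁻¹ by ring, abs_neg]
    exact abs_of_nonneg (by positivity)
  · simp
  · omega
  · simp

lemma l1Norm_cycShiftAvg_two_mul_sub_e0 {m : ℕ} (hm : 0 < m) (hmu : 2 * m ≤ u) :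
    l1Norm u (cycShiftAvg u (2 * m) (e0 u) - cycShiftAvg u m (e0 u)) = 1 := by
  simp only [l1Norm, abs_cycShiftAvg_two_mul_sub_e0_apply hmu]
  exact sum_cycShiftAvg_e0 (by omega) hmu

end CyclicShift

lemma filter_range_two_pow_succ_le {u : ℕ} (hu : u ≠ 0) :
    (range u).filter (fun k => 2 ^ (k + 1) ≤ u) = range (Nat.log 2 u) := by
  ext k
  simp only [mem_filter, mem_range, ← Nat.le_log_iff_pow_le one_lt_two hu, Nat.add_one_le_iff]
  exact and_iff_right_of_imp fun hk => hk.trans (Nat.log_lt_self 2 hu)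

/-- On `ℓ¹_u` with the cyclic right shift `T` (an isometry) and `x = (1,0,…,0)` (of norm `1`):
`‖A_{2^{k+1}} x − A_{2^k} x‖ = 1` whenever `2^{k+1} ≤ u`; consequently, for `p ≥ 1`,
`∑_{k : 2^{k+1} ≤ u} ‖A_{2^{k+1}} x − A_{2^k} x‖^p ≥ ⌊log₂ u⌋`, which is unbounded in `u`. -/
theorem stmt19 (u : ℕ) (hu : 2 ≤ u) :
    (∀ z : Fin u → ℝ, l1Norm u (cycShift u z) = l1Norm u z) ∧
    l1Norm u (e0 u) = 1 ∧
    (∀ k : ℕ, 2 ^ (k + 1) ≤ u →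
      l1Norm u (cycShiftAvg u (2 ^ (k + 1)) (e0 u) - cycShiftAvg u (2 ^ k) (e0 u)) = 1) ∧
    (∀ p : ℝ, 1 ≤ p →
      (Nat.log 2 u : ℝ) ≤
        ∑ k ∈ (Finset.range u).filter (fun k => 2 ^ (k + 1) ≤ u),
          l1Norm u (cycShiftAvg u (2 ^ (k + 1)) (e0 u) - cycShiftAvg u (2 ^ k) (e0 u)) ^ p) := by
  have : NeZero u := ⟨by omega⟩
  have hdyadic : ∀ k : ℕ, 2 ^ (k + 1) ≤ u →
      l1Norm u (cycShiftAvg u (2 ^ (k + 1)) (e0 u) - cycShiftAvg u (2 ^ k) (e0 u)) = 1 := by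
    intro k hk
    rw [pow_succ'] at hk ⊢
    exact l1Norm_cycShiftAvg_two_mul_sub_e0 (by positivity) hk
  refine ⟨l1Norm_cycShift, l1Norm_e0, hdyadic, fun p _ => ?_⟩
  rw [filter_range_two_pow_succ_le (by omega), sum_congr rfl fun k hk => by
    rw [hdyadic k ((Nat.le_log_iff_pow_le one_lt_two (by omega)).mp (mem_range.mp hk)),
      Real.one_rpow]]
  simp
end
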